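/- Let φ be an analytic self-map of the open unit disk 𝔻. Then the composition operator C_φ on H² is normal if and only if φ(z) = αz for some α ∈ ℂ with |α| ≤ 1. -/

import Mathlib

open scoped ComplexConjugate InnerProductSpace ENNReal NNReal
open Complex Metric

noncomputable section

abbrev H2 : Type := lp (fun _ : ℕ => ℂ) 2

namespace H2

/-- Evaluation of an element of `H²` (given by its sequence of Taylor coefficients)
at a point `z` of the unit disk: `f(z) = ∑ aₙ zⁿ`. -/
def eval (f : H2) (z : ℂ) : ℂ := ∑' n : ℕ, (f : ∀ _ : ℕ, ℂ) n * z ^ n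

/-- The Szegő kernel function `K_w(z) = 1/(1 - conj w * z)`. -/
def ker (w z : ℂ) : ℂ := (1 - conj w * z)⁻¹

lemma kernel_memℓp (w : ℂ) (hw : ‖w‖ < 1) :
    Memℓp (fun n : ℕ => (conj w) ^ n) 2 := by
  apply memℓp_gen
  have hsum : Summable (fun n : ℕ => (‖w‖ ^ 2) ^ n) :=
    summable_geometric_of_lt_one (by positivity) (by nlinarith [norm_nonneg w])
  refine hsum.congr fun n => ?_
  have h2 : ((2 : ℝ≥0∞).toReal) = ((2 : ℕ) : ℝ) := by simp
  rw [h2, Real.rpow_natCast]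
  simp [norm_pow, ← pow_mul, Nat.mul_comm]

/-- The reproducing kernel of `H²` at `w` in the unit disk, as an element of `H²`. -/
def kernel (w : ℂ) : H2 :=
  if hw : ‖w‖ < 1 then ⟨fun n : ℕ => (conj w) ^ n, kernel_memℓp w hw⟩ else 0

/-- `T` is the composition operator `C_φ` on `H²`. -/
def IsCompOp (φ : ℂ → ℂ) (T : H2 →L[ℂ] H2) : Prop :=
  ∀ f : H2, ∀ z : ℂ, ‖z‖ < 1 → eval (T f) z = eval f (φ z)

/-- `W` is the weighted composition operator `W_{ψ,φ}` on `H²`. -/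
def IsWCompOp (ψ φ : ℂ → ℂ) (W : H2 →L[ℂ] H2) : Prop :=
  ∀ f : H2, ∀ z : ℂ, ‖z‖ < 1 → eval (W f) z = ψ z * eval f (φ z)

/-- A conjugation on `H²`: a conjugate-linear involution satisfying `⟪Cx, Cy⟫ = ⟪y, x⟫`. -/
structure IsConjugation (C : H2 → H2) : Prop where
  map_add : ∀ x y : H2, C (x + y) = C x + C y
  map_smul : ∀ (c : ℂ) (x : H2), C (c • x) = conj c • C x
  invol : ∀ x : H2, C (C x) = x
  inner_conj : ∀ x y : H2, ⟪C x, C y⟫_ℂ = ⟪y, x⟫_ℂ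

/-- `T` is `C`-normal: `C T* T C = T T*`. -/
def CNormal (C : H2 → H2) (T : H2 →L[ℂ] H2) : Prop :=
  ∀ x : H2, C ((ContinuousLinearMap.adjoint T) (T (C x)))
      = T ((ContinuousLinearMap.adjoint T) x)

/-- `T` is a normal operator: `T* T = T T*`. -/
def IsNormalOp (T : H2 →L[ℂ] H2) : Prop :=
  (ContinuousLinearMap.adjoint T).comp T = T.comp (ContinuousLinearMap.adjoint T)

/-- `T` is a unitary operator. -/
def IsUnitaryOp (T : H2 →L[ℂ] H2) : Prop :=
  T.comp (ContinuousLinearMap.adjoint T) = ContinuousLinearMap.id ℂ H2 ∧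
  (ContinuousLinearMap.adjoint T).comp T = ContinuousLinearMap.id ℂ H2

/-- `C` is the conjugation `J_μ` on `H²`: `(J_μ f)(z) = conj (f (μ * conj z))`. -/
def IsJmu (μ : ℂ) (C : H2 → H2) : Prop :=
  ∀ f : H2, ∀ z : ℂ, ‖z‖ < 1 → eval (C f) z = conj (eval f (μ * conj z))

/-- `ξ_p(z) = √(1-|p|²) / (1 - conj p * z)`. -/
def xi (p z : ℂ) : ℂ := (Real.sqrt (1 - ‖p‖ ^ 2) : ℂ) / (1 - conj p * z)

/-- `τ_p(z) = λ (p - z) / (1 - conj p * z)`. -/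
def tau (p lam z : ℂ) : ℂ := lam * (p - z) / (1 - conj p * z)

/-- `C` is the conjugation `J W_{ξ_p, τ_p}` on `H²`:
`(C f)(z) = conj (ξ_p(conj z) * f (τ_p (conj z)))`. -/
def IsJW (p lam : ℂ) (C : H2 → H2) : Prop :=
  ∀ f : H2, ∀ z : ℂ, ‖z‖ < 1 →
    eval (C f) z = conj (xi p (conj z) * eval f (tau p lam (conj z)))

end H2

/-! `C_φ` fixes the constant `1`, and its adjoint maps the reproducing kernel `K_w` to `K_{φ w}`.
Normality gives `‖K_{φ 0}‖ = ‖C_φ* 1‖ = ‖C_φ 1‖ = ‖K_0‖`, forcing `φ 0 = 0`. Then the first Taylor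
coefficient of `C_φ f` is `φ'(0) f'(0)` by the chain rule, so `C_φ* z = conj (φ'(0)) z`, and
normality at `z` gives `‖φ‖ = |φ'(0)|`: all other Taylor coefficients of `φ` vanish.
Conversely, `C_{αz}` is diagonal in the monomial basis, with eigenvalues `αⁿ`, hence normal. -/

section

variable {𝕜 E : Type*} [RCLike 𝕜] [NormedAddCommGroup E] [InnerProductSpace 𝕜 E]

theorem eq_inner_smul_of_norm_le_norm_inner {e x : E} (he : ‖e‖ = 1)
    (h : ‖x‖ ≤ ‖⟪e, x⟫_𝕜‖) : x = ⟪e, x⟫_𝕜 • e := by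
  -- Pythagoras: `‖x - ⟪e, x⟫ • e‖² = ‖x‖² - ‖⟪e, x⟫‖²`.
  have hre : RCLike.re ⟪x, ⟪e, x⟫_𝕜 • e⟫_𝕜 = ‖⟪e, x⟫_𝕜‖ ^ 2 := by
    rw [inner_smul_right, ← inner_conj_symm, RCLike.conj_mul, ← RCLike.ofReal_pow,
      RCLike.ofReal_re, RCLike.norm_conj]
  have hsq : ‖x - ⟪e, x⟫_𝕜 • e‖ ^ 2 ≤ 0 := by
    rw [@norm_sub_sq 𝕜, hre, norm_smul, he, mul_one]
    nlinarith [norm_nonneg x]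
  exact sub_eq_zero.mp (norm_eq_zero.mp (by nlinarith [norm_nonneg (x - ⟪e, x⟫_𝕜 • e)]))

end

theorem Complex.norm_le_one_of_forall_norm_mul_lt_one {α : ℂ}
    (h : ∀ z : ℂ, ‖z‖ < 1 → ‖α * z‖ < 1) : ‖α‖ ≤ 1 := by
  by_contra! hα
  have hα0 : ‖α‖ ≠ 0 := by positivity
  have := h (‖α‖⁻¹ : ℝ) (by simpa using inv_lt_one_of_one_lt₀ hα)
  simp [hα0] at this

namespace lp

variable {𝕜 ι : Type*} [RCLike 𝕜] [DecidableEq ι]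

theorem inner_single_one_left (i : ι) (f : lp (fun _ : ι => 𝕜) 2) :
    ⟪lp.single 2 i (1 : 𝕜), f⟫_𝕜 = f i := by
  simp [lp.inner_single_left]

section Diagonal

variable {T : lp (fun _ : ι => 𝕜) 2 →L[𝕜] lp (fun _ : ι => 𝕜) 2} {μ : ι → 𝕜}

theorem adjoint_apply_of_apply_single (hT : ∀ i, T (lp.single 2 i 1) = μ i • lp.single 2 i 1)
    (y : lp (fun _ : ι => 𝕜) 2) (i : ι) :
    ContinuousLinearMap.adjoint T y i = conj (μ i) * y i := by
  rw [← inner_single_one_left, ContinuousLinearMap.adjoint_inner_right, hT, inner_smul_left,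
    inner_single_one_left]

theorem adjoint_apply_single (hT : ∀ i, T (lp.single 2 i 1) = μ i • lp.single 2 i 1)
    (i : ι) :
    ContinuousLinearMap.adjoint T (lp.single 2 i 1) = conj (μ i) • lp.single 2 i 1 := by
  ext j
  rw [adjoint_apply_of_apply_single hT, lp.coeFn_smul, Pi.smul_apply, lp.coeFn_single]
  rcases eq_or_ne i j with rfl | hij
  · simp
  · simp [Pi.single_eq_of_ne' hij]

theorem apply_of_apply_single (hT : ∀ i, T (lp.single 2 i 1) = μ i • lp.single 2 i 1)
    (x : lp (fun _ : ι => 𝕜) 2) (i : ι) : T x i = μ i * x i := by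
  simpa using adjoint_apply_of_apply_single (adjoint_apply_single hT) x i

theorem isStarNormal_of_apply_single
    (hT : ∀ i, T (lp.single 2 i 1) = μ i • lp.single 2 i 1) : IsStarNormal T := by
  refine ⟨ContinuousLinearMap.ext fun x => lp.ext (funext fun i => ?_)⟩
  simp only [ContinuousLinearMap.star_eq_adjoint, mul_apply_eq_comp,
    adjoint_apply_of_apply_single hT, apply_of_apply_single hT]
  ring

end Diagonal

end lp

namespace H2

open FormalMultilinearSeries

theorem isNormalOp_iff_isStarNormal {T : H2 →L[ℂ] H2} : IsNormalOp T ↔ IsStarNormal T :=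
  ⟨fun h => ⟨h⟩, fun h => h.star_comm_self⟩

theorem one_le_radius (f : H2) : 1 ≤ (ofScalars ℂ (f : ℕ → ℂ)).radius := by
  refine ENNReal.le_of_forall_nnreal_lt fun r hr => le_radius_of_bound _ ‖f‖ fun n => ?_
  rw [ofScalars_norm]
  have hr1 : (r : ℝ) ^ n ≤ 1 := pow_le_one₀ r.coe_nonneg (by exact_mod_cast hr.le)
  simpa using mul_le_mul (lp.norm_apply_le_norm two_ne_zero f n) hr1 (by positivity)
    (norm_nonneg f)

theorem hasFPowerSeriesOnBall_eval (f : H2) :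
    HasFPowerSeriesOnBall (eval f) (ofScalars ℂ (f : ℕ → ℂ)) 0 1 := by
  have heval : eval f = (ofScalars ℂ (f : ℕ → ℂ)).sum := by
    funext z
    exact tsum_congr fun n => by simp [mul_comm]
  have hpos : (0 : ℝ≥0∞) < (ofScalars ℂ (f : ℕ → ℂ)).radius :=
    zero_lt_one.trans_le (one_le_radius f)
  rw [heval]
  exact ((ofScalars ℂ (f : ℕ → ℂ)).hasFPowerSeriesOnBall hpos).mono zero_lt_one (one_le_radius f)

theorem ext_eval {f g : H2} (h : ∀ z : ℂ, ‖z‖ < 1 → eval f z = eval g z) : f = g := by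
  have heq : eval f =ᶠ[nhds 0] eval g := by
    filter_upwards [ball_mem_nhds (0 : ℂ) one_pos] with z hz
    exact h z (by simpa using hz)
  exact lp.ext (ofScalars_series_injective ℂ ℂ
    ((hasFPowerSeriesOnBall_eval f).hasFPowerSeriesAt.eq_formalMultilinearSeries_of_eventually
      (hasFPowerSeriesOnBall_eval g).hasFPowerSeriesAt heq))

theorem differentiableAt_eval (f : H2) {z : ℂ} (hz : ‖z‖ < 1) :
    DifferentiableAt ℂ (eval f) z :=
  ((hasFPowerSeriesOnBall_eval f).analyticAt_of_mem
    (by simpa [enorm_eq_nnnorm, ← NNReal.coe_lt_one] using hz)).differentiableAt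

theorem deriv_eval_zero (f : H2) : deriv (eval f) 0 = f 1 := by
  rw [(hasFPowerSeriesOnBall_eval f).hasFPowerSeriesAt.deriv]
  simp [ofScalars]

theorem eval_single (n : ℕ) (c z : ℂ) : eval (lp.single 2 n c) z = c * z ^ n := by
  rw [eval, tsum_eq_single n fun m hm => by simp [Pi.single_eq_of_ne hm]]
  simp

theorem eval_smul (a : ℂ) (f : H2) (z : ℂ) : eval (a • f) z = a * eval f z := by
  rw [eval, eval, ← tsum_mul_left]
  exact tsum_congr fun n => by simp [mul_assoc]

theorem kernel_apply {w : ℂ} (hw : ‖w‖ < 1) (n : ℕ) : kernel w n = conj w ^ n := by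
  rw [kernel, dif_pos hw]

theorem eval_kernel {w z : ℂ} (hw : ‖w‖ < 1) (hz : ‖z‖ < 1) : eval (kernel w) z = ker w z := by
  have hwz : ‖conj w * z‖ < 1 := by
    rw [norm_mul, RCLike.norm_conj]
    nlinarith [norm_nonneg w, norm_nonneg z]
  simp only [eval, kernel_apply hw, ← mul_pow, tsum_geometric_of_norm_lt_one hwz, ker]

theorem inner_kernel_left {w : ℂ} (hw : ‖w‖ < 1) (f : H2) : ⟪kernel w, f⟫_ℂ = eval f w := by
  rw [lp.inner_eq_tsum, eval]
  exact tsum_congr fun n => by simp [kernel_apply hw, mul_comm]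

theorem norm_kernel_sq {w : ℂ} (hw : ‖w‖ < 1) : ‖kernel w‖ ^ 2 = (1 - ‖w‖ ^ 2)⁻¹ := by
  rw [← @inner_self_eq_norm_sq ℂ, inner_kernel_left hw, eval_kernel hw hw, ker, Complex.conj_mul']
  norm_cast

end H2

namespace H2.IsCompOp

open ContinuousLinearMap

variable {φ : ℂ → ℂ} {T : H2 →L[ℂ] H2}

theorem adjoint_kernel (hT : IsCompOp φ T) {w : ℂ} (hw : ‖w‖ < 1) (hφw : ‖φ w‖ < 1) :
    adjoint T (kernel w) = kernel (φ w) :=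
  ext_inner_right ℂ fun f => by
    rw [adjoint_inner_left, inner_kernel_left hw, hT f w hw, inner_kernel_left hφw]

theorem apply_kernel_zero (hT : IsCompOp φ T) (hself : ∀ z : ℂ, ‖z‖ < 1 → ‖φ z‖ < 1) :
    T (kernel 0) = kernel 0 :=
  ext_eval fun z hz => by
    have h0 : ‖(0 : ℂ)‖ < 1 := by simp
    rw [hT _ z hz, eval_kernel h0 (hself z hz), eval_kernel h0 hz]
    simp [ker]

theorem map_zero_of_isStarNormal (hT : IsCompOp φ T) (hself : ∀ z : ℂ, ‖z‖ < 1 → ‖φ z‖ < 1)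
    (hN : IsStarNormal T) : φ 0 = 0 := by
  have h0 : ‖(0 : ℂ)‖ < 1 := by simp
  have hnorm := isStarNormal_iff_norm_eq_adjoint.mp hN (kernel 0)
  rw [hT.apply_kernel_zero hself, hT.adjoint_kernel h0 (hself 0 h0)] at hnorm
  have hsq := congrArg (· ^ 2) hnorm
  simp only [norm_kernel_sq h0, norm_kernel_sq (hself 0 h0)] at hsq
  simpa using (show ‖φ 0‖ ^ 2 = 0 by simpa using hsq)

theorem eval_apply_single_one (hT : IsCompOp φ T) {z : ℂ} (hz : ‖z‖ < 1) :
    eval (T (lp.single 2 1 1)) z = φ z := by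
  rw [hT _ z hz, eval_single, one_mul, pow_one]

theorem apply_coeff_one (hT : IsCompOp φ T) (hφ0 : φ 0 = 0) (f : H2) :
    T f 1 = T (lp.single 2 1 1) 1 * f 1 := by
  set g := T (lp.single 2 1 1)
  have h0 : ‖(0 : ℂ)‖ < 1 := by simp
  have hg0 : eval g 0 = 0 := by rw [hT.eval_apply_single_one h0, hφ0]
  have hcomp : eval (T f) =ᶠ[nhds 0] eval f ∘ eval g := by
    filter_upwards [ball_mem_nhds (0 : ℂ) one_pos] with z hz
    have hz' : ‖z‖ < 1 := by simpa using hz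
    rw [hT f z hz', Function.comp_apply, hT.eval_apply_single_one hz']
  have hchain := deriv_comp (0 : ℂ) (hg0 ▸ differentiableAt_eval f h0) (differentiableAt_eval g h0)
  rw [← deriv_eval_zero, hcomp.deriv_eq, hchain, hg0, deriv_eval_zero, deriv_eval_zero, mul_comm]

theorem adjoint_single_one (hT : IsCompOp φ T) (hφ0 : φ 0 = 0) :
    adjoint T (lp.single 2 1 1) = conj (T (lp.single 2 1 1) 1) • lp.single 2 1 1 :=
  ext_inner_right ℂ fun f => by
    rw [adjoint_inner_left, lp.inner_single_one_left, hT.apply_coeff_one hφ0, inner_smul_left,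
      lp.inner_single_one_left, Complex.conj_conj]

theorem exists_eq_mul_of_isStarNormal (hT : IsCompOp φ T)
    (hself : ∀ z : ℂ, ‖z‖ < 1 → ‖φ z‖ < 1) (hN : IsStarNormal T) :
    ∃ α : ℂ, ∀ z : ℂ, ‖z‖ < 1 → φ z = α * z := by
  set e : H2 := lp.single 2 1 1
  have he : ‖e‖ = 1 := by simp [e, lp.norm_single]
  have hnorm : ‖T e‖ ≤ ‖⟪e, T e⟫_ℂ‖ := by
    rw [isStarNormal_iff_norm_eq_adjoint.mp hN, hT.adjoint_single_one
      (hT.map_zero_of_isStarNormal hself hN), norm_smul, he, lp.inner_single_one_left,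
      RCLike.norm_conj, mul_one]
  have hTe : T e = T e 1 • e := by
    simpa only [e, lp.inner_single_one_left] using eq_inner_smul_of_norm_le_norm_inner he hnorm
  refine ⟨T e 1, fun z hz => ?_⟩
  calc φ z = eval (T e) z := (hT.eval_apply_single_one hz).symm
    _ = eval (T e 1 • e) z := by rw [← hTe]
    _ = T e 1 * z := by rw [eval_smul, eval_single, one_mul, pow_one]

theorem apply_single_of_eq_mul (hT : IsCompOp φ T) {α : ℂ}
    (hα : ∀ z : ℂ, ‖z‖ < 1 → φ z = α * z) (n : ℕ) :
    T (lp.single 2 n 1) = α ^ n • lp.single 2 n 1 :=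
  ext_eval fun z hz => by
    rw [hT _ z hz, eval_smul, eval_single, eval_single, hα z hz, mul_pow]
    ring

end H2.IsCompOp

theorem stmt16_general (φ : ℂ → ℂ)
    (hself : ∀ z : ℂ, ‖z‖ < 1 → ‖φ z‖ < 1)
    (T : H2 →L[ℂ] H2) (hT : H2.IsCompOp φ T) :
    H2.IsNormalOp T ↔ ∃ α : ℂ, ‖α‖ ≤ 1 ∧ ∀ z : ℂ, ‖z‖ < 1 → φ z = α * z := by
  rw [H2.isNormalOp_iff_isStarNormal]
  constructor
  · intro hN
    obtain ⟨α, hα⟩ := hT.exists_eq_mul_of_isStarNormal hself hN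
    refine ⟨α, Complex.norm_le_one_of_forall_norm_mul_lt_one fun z hz => ?_, hα⟩
    simpa only [hα z hz] using hself z hz
  · rintro ⟨α, -, hα⟩
    exact lp.isStarNormal_of_apply_single (hT.apply_single_of_eq_mul hα)

/-- Lemma: for an analytic self-map `φ` of `𝔻`, the composition operator `C_φ` is normal
on `H²` iff `φ(z) = α z` with `|α| ≤ 1`. -/
theorem stmt16 (φ : ℂ → ℂ)
    (hφa : DifferentiableOn ℂ φ (Metric.ball (0 : ℂ) 1))
    (hself : ∀ z : ℂ, ‖z‖ < 1 → ‖φ z‖ < 1)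
    (T : H2 →L[ℂ] H2) (hT : H2.IsCompOp φ T) :
    H2.IsNormalOp T ↔ ∃ α : ℂ, ‖α‖ ≤ 1 ∧ ∀ z : ℂ, ‖z‖ < 1 → φ z = α * z :=
  stmt16_general φ hself T hT
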